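/- Fix f ∈ ℝ^d and let P_{w,f} denote the distribution on ℝ^d × ℝ of a single heteroscedastic regression sample with regressor w and noise model f. Then for every measurable estimator ŵ : (ℝ^d × ℝ)^n → ℝ^d, inf over estimators of sup over w ∈ ℝ^d of E_{(x_i,y_i) i.i.d. ~ P_{w,f}}[‖ŵ − w‖²] ≥ c‖f‖²/n for an absolute constant c > 0. (The hard pair of alternatives both have noise model f and regressors differing along the direction of f, for which KL(P_{w₁,f} ‖ P_{w₂,f}) = ‖w₁ − w₂‖²/‖f‖².) -/

import Mathlib

open MeasureTheory ProbabilityTheory Real Matrix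
open scoped ENNReal NNReal BigOperators RealInnerProductSpace

noncomputable section

/-- The standard Gaussian measure `N(0, I_d)` on `ℝ^d`. -/
def stdGaussian (d : ℕ) : Measure (EuclideanSpace ℝ (Fin d)) :=
  (Measure.pi fun _ => gaussianReal 0 1).map (MeasurableEquiv.toLp 2 (Fin d → ℝ))

/-- The law of one sample `(x, y)` of the heteroscedastic linear regression model
`y = ⟨w, x⟩ + ε ⟨f, x⟩` with `x ~ N(0, I_d)` and `ε ~ N(0,1)` independent of `x`. -/
def heteroModel (d : ℕ) (w f : EuclideanSpace ℝ (Fin d)) :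
    Measure (EuclideanSpace ℝ (Fin d) × ℝ) :=
  Measure.map (fun p => (p.1, ⟪w, p.1⟫ + p.2 * ⟪f, p.1⟫))
    ((stdGaussian d).prod (gaussianReal 0 1))

/-- The joint law of `n` i.i.d. samples of the heteroscedastic regression model. -/
def hetSamples (d n : ℕ) (w f : EuclideanSpace ℝ (Fin d)) :
    Measure (Fin n → EuclideanSpace ℝ (Fin d) × ℝ) :=
  Measure.pi fun _ => heteroModel d w f

/-!
Le Cam's two-point method with the hypotheses `w = t • f` and `w = -t • f`, `t = 1 / (4 √n)`.
If `w = a • f`, a sample is `(x, s ⟪f, x⟫)` with `s = a + ε ~ N(a, 1)`, so both sample laws are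
images of one map applied to products of `N(0, I_d) ⊗ N(±t, 1)`, and the law for `-t` is the law
for `t` reweighted by the Gaussian likelihood ratio `exp (-2t ∑ sᵢ)`. By a Chernoff bound this
ratio is at least `e⁻¹` with probability at least `1/2`, while the squared distances of any
estimate to the two hypotheses add up to at least `2 t² ‖f‖²`. Hence the two risks add up to at
least `e⁻¹ t² ‖f‖² = e⁻¹ ‖f‖² / (16 n)`.
-/

namespace MeasureTheory

lemma lintegral_fintype_prod_eq_prod {ι : Type*} [Fintype ι] {α : ι → Type*}
    [∀ i, MeasurableSpace (α i)] (μ : ∀ i, Measure (α i)) [∀ i, IsProbabilityMeasure (μ i)]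
    {g : ∀ i, α i → ℝ≥0∞} (hg : ∀ i, Measurable (g i)) :
    ∫⁻ x, ∏ i, g i (x i) ∂Measure.pi μ = ∏ i, ∫⁻ y, g i y ∂μ i := by
  rw [lintegral_prod_eq_prod_lintegral_of_indepFun _ _
    (iIndepFun_pi fun i => (hg i).aemeasurable) fun i => (hg i).comp (measurable_pi_apply i)]
  exact Finset.prod_congr rfl fun i _ => (measurePreserving_eval μ i).lintegral_comp (hg i)

lemma Measure.pi_withDensity {ι : Type*} [Fintype ι] {α : ι → Type*}
    [∀ i, MeasurableSpace (α i)] (μ : ∀ i, Measure (α i)) [∀ i, IsProbabilityMeasure (μ i)]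
    {g : ∀ i, α i → ℝ≥0∞} (hg : ∀ i, Measurable (g i))
    [∀ i, SigmaFinite ((μ i).withDensity (g i))] :
    Measure.pi (fun i => (μ i).withDensity (g i))
      = (Measure.pi μ).withDensity fun x => ∏ i, g i (x i) := by
  refine Measure.pi_eq fun s hs => ?_
  rw [withDensity_apply _ (.univ_pi hs), ← lintegral_indicator (.univ_pi hs)]
  have h_indicator : (Set.univ.pi s).indicator (fun x => ∏ i, g i (x i))
      = fun x => ∏ i, (s i).indicator (g i) (x i) := by
    funext x
    classical
    simp only [Set.indicator_apply, Finset.prod_ite_zero, Set.mem_univ_pi, Finset.mem_univ,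
      true_imp_iff]
  rw [h_indicator, lintegral_fintype_prod_eq_prod μ fun i => (hg i).indicator (hs i)]
  exact Finset.prod_congr rfl fun i _ => by
    rw [withDensity_apply _ (hs i), lintegral_indicator (hs i)]

lemma mul_measure_le_lintegral_add_lintegral_withDensity {α : Type*} [MeasurableSpace α]
    {P : Measure α} {G L₁ L₂ : α → ℝ≥0∞} {S : Set α} {c D : ℝ≥0∞} (hG : Measurable G)
    (hL₂ : Measurable L₂) (hS : MeasurableSet S) (hc : c ≤ 1) (hGS : ∀ z ∈ S, c ≤ G z)
    (hD : ∀ z, D ≤ L₁ z + L₂ z) :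
    c * D * P S ≤ ∫⁻ z, L₁ z ∂P + ∫⁻ z, L₂ z ∂P.withDensity G := by
  rw [lintegral_withDensity_eq_lintegral_mul _ hG hL₂, ← lintegral_add_right _ (hG.mul hL₂)]
  calc c * D * P S = ∫⁻ _ in S, c * D ∂P := (setLIntegral_const S _).symm
    _ ≤ ∫⁻ z in S, L₁ z + (G * L₂) z ∂P := setLIntegral_mono' hS fun z hz =>
        calc c * D ≤ c * L₁ z + c * L₂ z := by rw [← mul_add]; gcongr; exact hD z
          _ ≤ L₁ z + G z * L₂ z := by gcongr; exacts [mul_le_of_le_one_left' hc, hGS z hz]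
    _ ≤ ∫⁻ z, L₁ z + (G * L₂) z ∂P := setLIntegral_le_lintegral _ _

end MeasureTheory

lemma norm_sub_sq_le_two_mul_add {E : Type*} [SeminormedAddCommGroup E] (x a b : E) :
    ‖a - b‖ ^ 2 ≤ 2 * (‖x - a‖ ^ 2 + ‖x - b‖ ^ 2) := by
  have h : ‖a - b‖ ≤ ‖x - a‖ + ‖x - b‖ := norm_sub_rev x a ▸ norm_sub_le_norm_sub_add_norm_sub a x b
  nlinarith [norm_nonneg (a - b), sq_nonneg (‖x - a‖ - ‖x - b‖)]

namespace ProbabilityTheory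

lemma gaussianReal_add_mul_eq_withDensity (m a : ℝ) {v : ℝ≥0} (hv : v ≠ 0) :
    gaussianReal (m + v * a) v = (gaussianReal m v).withDensity
      fun s => ENNReal.ofReal (exp (a * (s - m) - v * a ^ 2 / 2)) := by
  rw [gaussianReal_of_var_ne_zero _ hv, gaussianReal_of_var_ne_zero _ hv,
    ← withDensity_mul _ (measurable_gaussianPDF _ _) (by fun_prop)]
  congr 1
  funext s
  simp only [Pi.mul_apply, gaussianPDF, gaussianPDFReal]
  rw [← ENNReal.ofReal_mul (by positivity), mul_assoc _ (exp _), ← exp_add]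
  have hv' : (v : ℝ) ≠ 0 := by exact_mod_cast hv
  congr 3
  field_simp
  ring

lemma measureReal_le_sum_snd_le {ι α : Type*} [Fintype ι] [MeasurableSpace α] (μ : Measure α)
    [IsProbabilityMeasure μ] (m : ℝ) (v : ℝ≥0) {a : ℝ} (ha : 0 ≤ a) (r : ℝ) :
    (Measure.pi fun _ : ι => μ.prod (gaussianReal m v)).real {z | r ≤ ∑ i, (z i).2}
      ≤ exp (-a * r + Fintype.card ι * (m * a + v * a ^ 2 / 2)) := by
  set P := Measure.pi fun _ : ι => μ.prod (gaussianReal m v)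
  set Y : ι → (ι → α × ℝ) → ℝ := fun i z => (z i).2
  have hY : ∀ i, Measurable (Y i) := fun i => (measurable_pi_apply i).snd
  have h_indep : iIndepFun Y P := iIndepFun_pi fun _ => measurable_snd.aemeasurable
  have h_law : ∀ i, P.map (Y i) = gaussianReal m v := fun i => by
    rw [show Y i = Prod.snd ∘ Function.eval i from rfl,
      ← Measure.map_map measurable_snd (measurable_pi_apply i),
      (measurePreserving_eval _ i).map_eq, Measure.map_snd_prod, measure_univ, one_smul]
  have h_int : ∀ i ∈ Finset.univ, Integrable (fun z => exp (a * Y i z)) P := fun i _ => by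
    have h := integrable_exp_mul_gaussianReal (μ := m) (v := v) a
    rw [← h_law i, integrable_map_measure (by fun_prop) (hY i).aemeasurable] at h
    exact h
  have h_mgf : mgf (∑ i, Y i) P a = exp (Fintype.card ι * (m * a + v * a ^ 2 / 2)) := by
    rw [h_indep.mgf_sum hY, Finset.prod_congr rfl fun i _ => mgf_gaussianReal (h_law i) a,
      Finset.prod_const, Finset.card_univ, ← exp_nat_mul]
  have h := measure_ge_le_exp_mul_mgf r ha (h_indep.integrable_exp_mul_sum hY h_int)
  simp only [h_mgf, Finset.sum_apply, ← exp_add] at h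
  exact h

lemma pi_prod_gaussianReal_neg_eq_withDensity {ι α : Type*} [Fintype ι] [MeasurableSpace α]
    (μ : Measure α) [IsProbabilityMeasure μ] (t : ℝ) :
    Measure.pi (fun _ : ι => μ.prod (gaussianReal (-t) 1))
      = (Measure.pi fun _ : ι => μ.prod (gaussianReal t 1)).withDensity
          fun z => ENNReal.ofReal (exp (-(2 * t) * ∑ i, (z i).2)) := by
  have h_tilt : gaussianReal (-t) 1
      = (gaussianReal t 1).withDensity fun s => ENNReal.ofReal (exp (-(2 * t) * s)) := by
    convert gaussianReal_add_mul_eq_withDensity t (-(2 * t)) one_ne_zero using 2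
    · push_cast; ring
    · funext s; push_cast; ring_nf
  have h_prod := prod_withDensity_right (μ := μ) (ν := gaussianReal t 1)
    (g := fun s => ENNReal.ofReal (exp (-(2 * t) * s))) (by fun_prop)
  have : IsProbabilityMeasure ((μ.prod (gaussianReal t 1)).withDensity
      fun p => ENNReal.ofReal (exp (-(2 * t) * p.2))) := by
    rw [← h_prod, ← h_tilt]; infer_instance
  rw [h_tilt, h_prod, Measure.pi_withDensity _ fun _ => by fun_prop]
  congr
  funext z
  rw [Finset.mul_sum, exp_sum, ENNReal.ofReal_prod_of_nonneg fun i _ => (exp_pos _).le]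

lemma half_le_measure_sum_snd_lt {ι α : Type*} [Fintype ι] [MeasurableSpace α]
    (μ : Measure α) [IsProbabilityMeasure μ] {t : ℝ} (ht : 0 < t)
    (h_card : 16 * Fintype.card ι * t ^ 2 ≤ 1) :
    ENNReal.ofReal (1 / 2)
      ≤ (Measure.pi fun _ : ι => μ.prod (gaussianReal t 1)) {z | ∑ i, (z i).2 < 1 / (2 * t)} := by
  set P := Measure.pi fun _ : ι => μ.prod (gaussianReal t 1)
  have h_meas : MeasurableSet {z : ι → α × ℝ | 1 / (2 * t) ≤ ∑ i, (z i).2} :=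
    measurableSet_le measurable_const (by fun_prop)
  -- Chernoff with exponent `4t`: the tail is at most `exp (-2 + 12 |ι| t²) ≤ exp (-5/4)`.
  have h_tail : P.real {z | 1 / (2 * t) ≤ ∑ i, (z i).2} ≤ 1 / 2 := by
    refine (measureReal_le_sum_snd_le μ t 1 (a := 4 * t) (by positivity) _).trans ?_
    calc exp (-(4 * t) * (1 / (2 * t))
          + Fintype.card ι * (t * (4 * t) + (1 : ℝ≥0) * (4 * t) ^ 2 / 2))
        ≤ exp (-(5 / 4)) := by
          gcongr
          field_simp
          push_cast
          nlinarith
      _ ≤ 1 / 2 := by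
          rw [exp_neg, one_div]
          gcongr
          linarith [add_one_le_exp (5 / 4 : ℝ)]
  have h_good : 1 / 2 ≤ P.real {z | ∑ i, (z i).2 < 1 / (2 * t)} := by
    have := probReal_compl_eq_one_sub (μ := P) h_meas
    simp only [Set.compl_ofPred, not_le] at this
    linarith
  rw [← ofReal_measureReal]
  exact ENNReal.ofReal_le_ofReal h_good

end ProbabilityTheory

instance isProbabilityMeasure_stdGaussian (d : ℕ) : IsProbabilityMeasure (stdGaussian d) :=
  Measure.isProbabilityMeasure_map (by fun_prop)

/-- If `w = a • f`, the response is `(a + ε) ⟪f, x⟫`, so a sample is the image of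
`(x, a + ε)` under `heteroObs f`. -/
def heteroObs {d : ℕ} (f : EuclideanSpace ℝ (Fin d)) (p : EuclideanSpace ℝ (Fin d) × ℝ) :
    EuclideanSpace ℝ (Fin d) × ℝ :=
  (p.1, p.2 * ⟪f, p.1⟫)

@[fun_prop]
lemma measurable_heteroObs {d : ℕ} (f : EuclideanSpace ℝ (Fin d)) : Measurable (heteroObs f) := by
  unfold heteroObs; fun_prop

lemma heteroModel_smul_self (d : ℕ) (a : ℝ) (f : EuclideanSpace ℝ (Fin d)) :
    heteroModel d (a • f) f = ((stdGaussian d).prod (gaussianReal a 1)).map (heteroObs f) := by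
  have h_shift : (stdGaussian d).prod (gaussianReal a 1)
      = ((stdGaussian d).prod (gaussianReal 0 1)).map (Prod.map id (· + a)) := by
    rw [← Measure.map_prod_map _ _ measurable_id (measurable_add_const a), Measure.map_id,
      gaussianReal_map_add_const, zero_add]
  rw [heteroModel, h_shift, Measure.map_map (by fun_prop) (by fun_prop)]
  congr 1
  funext p
  simp only [heteroObs, Function.comp_apply, Prod.map, id_eq, real_inner_smul_left]
  ring_nf

lemma hetSamples_smul_self (d n : ℕ) (a : ℝ) (f : EuclideanSpace ℝ (Fin d)) :
    hetSamples d n (a • f) f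
      = (Measure.pi fun _ : Fin n => (stdGaussian d).prod (gaussianReal a 1)).map
          fun z i => heteroObs f (z i) := by
  have : IsProbabilityMeasure (((stdGaussian d).prod (gaussianReal a 1)).map (heteroObs f)) :=
    Measure.isProbabilityMeasure_map (by fun_prop)
  rw [hetSamples, Measure.pi_map_pi fun _ => (measurable_heteroObs f).aemeasurable]
  simp_rw [heteroModel_smul_self]

lemma risk_add_risk_neg_ge {d n : ℕ} (f : EuclideanSpace ℝ (Fin d))
    {what : (Fin n → EuclideanSpace ℝ (Fin d) × ℝ) → EuclideanSpace ℝ (Fin d)}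
    (hwhat : Measurable what) {t : ℝ} (ht : 0 < t) (htn : 16 * n * t ^ 2 ≤ 1) :
    ENNReal.ofReal (exp (-1) * t ^ 2 * ‖f‖ ^ 2)
      ≤ ∫⁻ data, ENNReal.ofReal (‖what data - t • f‖ ^ 2) ∂hetSamples d n (t • f) f
        + ∫⁻ data, ENNReal.ofReal (‖what data - (-t) • f‖ ^ 2) ∂hetSamples d n ((-t) • f) f := by
  set P := Measure.pi fun _ : Fin n => (stdGaussian d).prod (gaussianReal t 1)
  set S := {z : Fin n → EuclideanSpace ℝ (Fin d) × ℝ | ∑ i, (z i).2 < 1 / (2 * t)}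
  set estimate := fun z : Fin n → EuclideanSpace ℝ (Fin d) × ℝ => what fun i => heteroObs f (z i)
  have h_est : Measurable estimate := hwhat.comp (by fun_prop)
  rw [hetSamples_smul_self, hetSamples_smul_self, pi_prod_gaussianReal_neg_eq_withDensity,
    lintegral_map (by fun_prop) (by fun_prop), lintegral_map (by fun_prop) (by fun_prop)]
  have h_ratio : ∀ z ∈ S,
      ENNReal.ofReal (exp (-1)) ≤ ENNReal.ofReal (exp (-(2 * t) * ∑ i, (z i).2)) :=
    fun z hz => by
      have : 2 * t * ∑ i, (z i).2 < 1 := by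
        rw [Set.mem_ofPred_eq, lt_div_iff₀ (by positivity)] at hz; linarith
      gcongr; linarith
  have h_sep : ∀ z, ENNReal.ofReal (2 * t ^ 2 * ‖f‖ ^ 2)
      ≤ ENNReal.ofReal (‖estimate z - t • f‖ ^ 2) + ENNReal.ofReal (‖estimate z - (-t) • f‖ ^ 2) :=
    fun z => by
      rw [← ENNReal.ofReal_add (by positivity) (by positivity)]
      have h := norm_sub_sq_le_two_mul_add (estimate z) (t • f) ((-t) • f)
      rw [← sub_smul, sub_neg_eq_add, norm_smul, Real.norm_of_nonneg (by positivity)] at h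
      exact ENNReal.ofReal_le_ofReal (by nlinarith)
  calc ENNReal.ofReal (exp (-1) * t ^ 2 * ‖f‖ ^ 2)
      = ENNReal.ofReal (exp (-1)) * ENNReal.ofReal (2 * t ^ 2 * ‖f‖ ^ 2)
          * ENNReal.ofReal (1 / 2) := by
        rw [← ENNReal.ofReal_mul (exp_pos _).le, ← ENNReal.ofReal_mul (by positivity)]
        ring_nf
    _ ≤ ENNReal.ofReal (exp (-1)) * ENNReal.ofReal (2 * t ^ 2 * ‖f‖ ^ 2) * P S := by
        gcongr
        exact half_le_measure_sum_snd_lt _ ht (by simpa using htn)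
    _ ≤ _ := mul_measure_le_lintegral_add_lintegral_withDensity (by fun_prop) (by fun_prop)
        (measurableSet_lt (by fun_prop) measurable_const)
        (ENNReal.ofReal_le_one.2 (exp_le_one_iff.2 (by norm_num))) h_ratio h_sep

/-- **Theorem (Coarse minimax lower bound for heteroscedastic regression).**
For any fixed noise model `f ∈ ℝ^d`, every measurable estimator `ŵ` of the regressor from
`n` i.i.d. samples of the heteroscedastic regression model incurs worst-case risk at least
`c‖f‖²/n` for an absolute constant `c > 0`:
`sup_w E_{P_{w,f}^{⊗n}}[‖ŵ - w‖²] ≥ c‖f‖²/n`. -/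
theorem heteroscedastic_minimax_lower_bound_coarse :
    ∃ c : ℝ, 0 < c ∧
      ∀ (d n : ℕ) (f : EuclideanSpace ℝ (Fin d)), 1 ≤ n →
        ∀ what : (Fin n → EuclideanSpace ℝ (Fin d) × ℝ) → EuclideanSpace ℝ (Fin d),
          Measurable what →
          ENNReal.ofReal (c * ‖f‖ ^ 2 / (n : ℝ)) ≤
            ⨆ w : EuclideanSpace ℝ (Fin d),
              ∫⁻ data, ENNReal.ofReal (‖what data - w‖ ^ 2) ∂(hetSamples d n w f) := by
  refine ⟨exp (-1) / 32, by positivity, fun d n f hn what hwhat => ?_⟩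
  have hn' : (0 : ℝ) < n := by exact_mod_cast hn
  set t := 1 / (4 * √n)
  have ht : 0 < t := by positivity
  have htn : 16 * n * t ^ 2 = 1 := by
    rw [div_pow, mul_pow, sq_sqrt hn'.le]; field_simp; ring
  clear_value t
  set risk := fun w => ∫⁻ data, ENNReal.ofReal (‖what data - w‖ ^ 2) ∂hetSamples d n w f
  have h_two : ENNReal.ofReal (2 * (exp (-1) / 32 * ‖f‖ ^ 2 / n)) ≤ 2 * ⨆ w, risk w :=
    calc ENNReal.ofReal (2 * (exp (-1) / 32 * ‖f‖ ^ 2 / n))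
        = ENNReal.ofReal (exp (-1) * t ^ 2 * ‖f‖ ^ 2) := by
          congr 1
          field_simp
          linear_combination (-2 * ‖f‖ ^ 2) * htn
      _ ≤ risk (t • f) + risk ((-t) • f) := risk_add_risk_neg_ge f hwhat ht htn.le
      _ ≤ (⨆ w, risk w) + ⨆ w, risk w := add_le_add (le_iSup risk _) (le_iSup risk _)
      _ = 2 * ⨆ w, risk w := (two_mul _).symm
  rw [ENNReal.ofReal_mul zero_le_two, ENNReal.ofReal_ofNat] at h_two
  exact (ENNReal.mul_le_mul_iff_right two_ne_zero ENNReal.ofNat_ne_top).1 h_two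

end
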